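/- arXiv:2511.16886 — 2 statements merged into one kernel-verified Lean document; each statement's English description precedes it below -/
import Mathlib

section
/- Let V be a nonempty finite type, let ℓu Δℓ : V → ℝ, and for w : ℝ define the guided policy π_w(a) = exp(ℓu a + w * Δℓ a) / Z(w) where Z(w) = ∑_{k ∈ V} exp(ℓu k + w * Δℓ k). Fix y⋆ : V and let L(w) = -log (π_w y⋆). Then for every w, the derivative of L at w is strictly negative if and only if Δℓ y⋆ > ∑_{a ∈ V} π_w(a) * Δℓ a (the Advantage Margin Condition). -/
open Real Finset

noncomputable def Zfun {V : Type*} [Fintype V] (ℓu Δℓ : V → ℝ) (w : ℝ) : ℝ :=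
  ∑ k, Real.exp (ℓu k + w * Δℓ k)

noncomputable def pol {V : Type*} [Fintype V] (ℓu Δℓ : V → ℝ) (w : ℝ) (a : V) : ℝ :=
  Real.exp (ℓu a + w * Δℓ a) / Zfun ℓu Δℓ w

noncomputable def lossCE {V : Type*} [Fintype V] (ℓu Δℓ : V → ℝ) (ystar : V) (w : ℝ) : ℝ :=
  -Real.log (pol ℓu Δℓ w ystar)

/-!
Writing `L(w) = log Z(w) - (ℓu y⋆ + w * Δℓ y⋆)`, the derivative of `L` is
`Z'(w) / Z(w) - Δℓ y⋆ = E_{π_w}[Δℓ] - Δℓ y⋆`, since differentiating the exponentials in `Z`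
brings down the factors `Δℓ k`.
-/

section GuidedPolicy

variable {V : Type*} [Fintype V] (ℓu Δℓ : V → ℝ)

lemma Zfun_pos [Nonempty V] (w : ℝ) : 0 < Zfun ℓu Δℓ w :=
  Finset.sum_pos (fun _ _ => exp_pos _) univ_nonempty

lemma hasDerivAt_Zfun (w : ℝ) :
    HasDerivAt (Zfun ℓu Δℓ) (∑ k, exp (ℓu k + w * Δℓ k) * Δℓ k) w :=
  HasDerivAt.fun_sum fun k _ => ((hasDerivAt_mul_const (Δℓ k)).const_add (ℓu k)).exp

lemma sum_pol_mul (f : V → ℝ) (w : ℝ) :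
    ∑ a, pol ℓu Δℓ w a * f a = (∑ a, exp (ℓu a + w * Δℓ a) * f a) / Zfun ℓu Δℓ w := by
  rw [sum_div]
  exact sum_congr rfl fun a _ => div_mul_eq_mul_div _ _ _

lemma hasDerivAt_log_Zfun [Nonempty V] (w : ℝ) :
    HasDerivAt (fun w => log (Zfun ℓu Δℓ w)) (∑ a, pol ℓu Δℓ w a * Δℓ a) w := by
  rw [sum_pol_mul]
  exact (hasDerivAt_Zfun ℓu Δℓ w).log (Zfun_pos ℓu Δℓ w).ne'

lemma lossCE_eq_log_Zfun_sub [Nonempty V] (ystar : V) (w : ℝ) :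
    lossCE ℓu Δℓ ystar w = log (Zfun ℓu Δℓ w) - (ℓu ystar + w * Δℓ ystar) := by
  rw [lossCE, pol, log_div (exp_pos _).ne' (Zfun_pos ℓu Δℓ w).ne', log_exp, neg_sub]

lemma hasDerivAt_lossCE [Nonempty V] (ystar : V) (w : ℝ) :
    HasDerivAt (lossCE ℓu Δℓ ystar) (∑ a, pol ℓu Δℓ w a * Δℓ a - Δℓ ystar) w := by
  have hlogit : HasDerivAt (fun w => ℓu ystar + w * Δℓ ystar) (Δℓ ystar) w :=
    (hasDerivAt_mul_const (Δℓ ystar)).const_add (ℓu ystar)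
  rw [funext (lossCE_eq_log_Zfun_sub ℓu Δℓ ystar)]
  exact (hasDerivAt_log_Zfun ℓu Δℓ w).sub hlogit

end GuidedPolicy

theorem advantage_margin_condition_general {V : Type*} [Fintype V]
    (ℓu Δℓ : V → ℝ) (ystar : V) :
    ∀ w : ℝ,
      deriv (lossCE ℓu Δℓ ystar) w < 0 ↔
        Δℓ ystar > ∑ a, pol ℓu Δℓ w a * Δℓ a := by
  have : Nonempty V := ⟨ystar⟩
  intro w
  rw [(hasDerivAt_lossCE ℓu Δℓ ystar w).deriv, sub_neg, gt_iff_lt]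

/-- Advantage Margin Condition: the derivative of the cross-entropy loss
`L(w) = -log π_w(y⋆)` at `w` is strictly negative iff
`Δℓ y⋆ > ∑_a π_w(a) * Δℓ a`. -/
theorem advantage_margin_condition {V : Type*} [Fintype V] [Nonempty V]
    (ℓu Δℓ : V → ℝ) (ystar : V) :
    ∀ w : ℝ,
      deriv (lossCE ℓu Δℓ ystar) w < 0 ↔
        Δℓ ystar > ∑ a, pol ℓu Δℓ w a * Δℓ a :=
  advantage_margin_condition_general ℓu Δℓ ystar
end

section
/- Let V be a nonempty finite type, let π̂ : V → ℝ be a strictly positive probability distribution on V (π̂ a > 0 for all a, ∑_a π̂ a = 1), and let A : V → ℝ be an advantage function. Let f : V → ℝ be strictly positive and comonotone with A in the sense that (A a - A b) * (log (f a) - log (f b)) ≥ 0 for all a b : V. For w ≥ 0 define π_w(a) = π̂(a) * f(a)^w / (∑_{k ∈ V} π̂(k) * f(k)^w). Then the map w ↦ ∑_{a ∈ V} π_w(a) * A a is monotone nondecreasing on [0, ∞); i.e. attenuating the optimality factor with exponent w yields a family of product policies whose expected advantage increases with w. -/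
open Real Finset

private lemma double_sum_expand {V : Type*} [Fintype V] (m h A : V → ℝ) :
    ∑ a, ∑ b, m a * m b * ((A a - A b) * (h a - h b)) =
      2 * ((∑ a, m a * h a * A a) * (∑ a, m a) -
        (∑ a, m a * A a) * (∑ a, m a * h a)) := by
  have e1 : ∀ (F G : V → ℝ), ∑ a, ∑ b, F a * G b = (∑ a, F a) * (∑ a, G a) := by
    intro F G
    rw [Finset.sum_mul_sum]
  calc ∑ a, ∑ b, m a * m b * ((A a - A b) * (h a - h b))
      = ∑ a, ∑ b, ((m a * h a * A a) * m b - (m a * A a) * (m b * h b)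
          - (m a * h a) * (m b * A b) + m a * (m b * h b * A b)) := by
        refine Finset.sum_congr rfl fun a _ => Finset.sum_congr rfl fun b _ => ?_
        ring
    _ = 2 * ((∑ a, m a * h a * A a) * (∑ a, m a) -
        (∑ a, m a * A a) * (∑ a, m a * h a)) := by
        simp only [Finset.sum_add_distrib, Finset.sum_sub_distrib, e1]
        ring

private lemma chebyshev_step {V : Type*} [Fintype V] [Nonempty V]
    (m h A : V → ℝ) (hm : ∀ a, 0 < m a) (hh : ∀ a, 0 < h a)
    (hcom : ∀ a b, 0 ≤ (A a - A b) * (h a - h b)) :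
    ∑ a, (m a / ∑ k, m k) * A a ≤ ∑ a, (m a * h a / ∑ k, m k * h k) * A a := by
  have hT1 : 0 < ∑ k, m k := Finset.sum_pos (fun k _ => hm k) Finset.univ_nonempty
  have hT2 : 0 < ∑ k, m k * h k :=
    Finset.sum_pos (fun k _ => mul_pos (hm k) (hh k)) Finset.univ_nonempty
  have hkey : 0 ≤ ∑ a, ∑ b, m a * m b * ((A a - A b) * (h a - h b)) := by
    refine Finset.sum_nonneg fun a _ => Finset.sum_nonneg fun b _ => ?_
    exact mul_nonneg (mul_pos (hm a) (hm b)).le (hcom a b)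
  rw [double_sum_expand] at hkey
  have hle : (∑ a, m a * A a) * (∑ a, m a * h a) ≤
      (∑ a, m a * h a * A a) * (∑ a, m a) := by linarith
  have l1 : ∑ a, (m a / ∑ k, m k) * A a = (∑ a, m a * A a) / (∑ k, m k) := by
    rw [Finset.sum_div]
    exact Finset.sum_congr rfl fun a _ => by ring
  have l2 : ∑ a, (m a * h a / ∑ k, m k * h k) * A a
      = (∑ a, m a * h a * A a) / (∑ k, m k * h k) := by
    rw [Finset.sum_div]
    exact Finset.sum_congr rfl fun a _ => by ring
  rw [l1, l2, div_le_div_iff₀ hT1 hT2]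
  linarith

/-- CFGRL-style controllable policy improvement: if `f` is strictly positive
and comonotone with the advantage `A`, then the expected advantage of the
product policy `π_w(a) ∝ π̂(a) f(a)^w` is monotone nondecreasing in the
guidance scale `w` on `[0, ∞)`. -/
theorem expected_advantage_monotone_in_guidance
    {V : Type*} [Fintype V] [Nonempty V]
    (piHat : V → ℝ) (hpos : ∀ a, 0 < piHat a) (hsum : ∑ a, piHat a = 1)
    (A : V → ℝ) (f : V → ℝ) (hf : ∀ a, 0 < f a)
    (hmono : ∀ a b : V, 0 ≤ (A a - A b) * (Real.log (f a) - Real.log (f b))) :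
    MonotoneOn
      (fun w =>
        ∑ a, (piHat a * f a ^ w / (∑ k, piHat k * f k ^ w)) * A a)
      (Set.Ici (0 : ℝ)) := by
  intro w₁ _ w₂ _ hw
  simp only []
  set δ := w₂ - w₁ with hδdef
  have hδ : 0 ≤ δ := sub_nonneg.2 hw
  have hsplit : ∀ a, piHat a * f a ^ w₂ = (piHat a * f a ^ w₁) * f a ^ δ := by
    intro a
    rw [show w₂ = w₁ + δ by ring, Real.rpow_add (hf a)]
    ring
  have hden : (∑ k, piHat k * f k ^ w₂) = ∑ k, (piHat k * f k ^ w₁) * f k ^ δ :=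
    Finset.sum_congr rfl fun k _ => hsplit k
  simp only [hsplit, hden]
  refine chebyshev_step (fun a => piHat a * f a ^ w₁) (fun a => f a ^ δ) A
    (fun a => mul_pos (hpos a) (Real.rpow_pos_of_pos (hf a) _))
    (fun a => Real.rpow_pos_of_pos (hf a) _) ?_
  intro a b
  rcases le_total (f a) (f b) with hle | hle
  · have hu : f a ^ δ ≤ f b ^ δ := Real.rpow_le_rpow (hf a).le hle hδ
    rcases eq_or_lt_of_le hle with heq | hlt
    · simp [heq]
    · have ht : Real.log (f a) < Real.log (f b) := Real.log_lt_log (hf a) hlt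
      have hAm := hmono a b
      have hs : A a - A b ≤ 0 := by nlinarith
      nlinarith
  · have hu : f b ^ δ ≤ f a ^ δ := Real.rpow_le_rpow (hf b).le hle hδ
    rcases eq_or_lt_of_le hle with heq | hlt
    · simp [heq]
    · have ht : Real.log (f b) < Real.log (f a) := Real.log_lt_log (hf b) hlt
      have hAm := hmono a b
      have hs : 0 ≤ A a - A b := by nlinarith
      nlinarith
end
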